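/- arXiv:2207.11326 — 7 statements merged into one kernel-verified Lean document; each statement's English description precedes it below -/
import Mathlib

section
/- For any integer h (possibly negative), the formal power series (e^{hx} − 1)/(e^x − 1) is a Hurwitz series, i.e., its exponential generating function coefficients are integers. -/
/-- A Hurwitz series: all exponential generating function coefficients are integers. -/
def IsHurwitz (f : PowerSeries ℚ) : Prop :=
  ∀ n : ℕ, ∃ m : ℤ, (Nat.factorial n : ℚ) * PowerSeries.coeff (R := ℚ) n f = m

/-!
For `h = m ≥ 0` the quotient is the finite geometric sum `∑_{k<m} e^{kx}`, and for `h = -m < 0`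
it is `-∑_{k<m} e^{(k-m)x}`. Each `e^{cx}` with `c ∈ ℤ` has Hurwitz coefficients `c^n`, and
Hurwitz series are closed under sums and negation. Since `e^x - 1` is not a zero divisor in
`ℚ⟦X⟧`, the given `f` is this sum.
-/

open PowerSeries Finset

namespace PowerSeries

variable {A : Type*} [CommRing A] [Algebra ℚ A]

theorem exp_sub_one_ne_zero [Nontrivial A] : exp A - 1 ≠ 0 := by
  intro h
  simpa [coeff_exp] using congrArg (coeff 1) h

theorem sum_range_rescale_exp_mul_exp_sub_one (a : A) (m : ℕ) :
    (∑ k ∈ range m, rescale (a + k) (exp A)) * (exp A - 1) =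
      rescale (a + m) (exp A) - rescale a (exp A) := by
  have hstep (k : ℕ) : rescale (a + k) (exp A) * (exp A - 1) =
      rescale (a + (k + 1 : ℕ)) (exp A) - rescale (a + k) (exp A) := by
    have hexp := exp_mul_exp_eq_exp_add (a + k) (1 : A)
    rw [rescale_one, RingHom.id_apply] at hexp
    rw [mul_sub, mul_one, hexp]
    push_cast
    ring_nf
  rw [sum_mul, sum_congr rfl fun k _ => hstep k,
    sum_range_sub (fun k : ℕ => rescale (a + k) (exp A))]
  simp

end PowerSeries

theorem isHurwitz_zero : IsHurwitz 0 := fun _ => ⟨0, by simp⟩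

theorem IsHurwitz.add {f g : ℚ⟦X⟧} (hf : IsHurwitz f) (hg : IsHurwitz g) :
    IsHurwitz (f + g) := fun n => by
  obtain ⟨a, ha⟩ := hf n
  obtain ⟨b, hb⟩ := hg n
  exact ⟨a + b, by rw [map_add, mul_add, ha, hb, Int.cast_add]⟩

theorem IsHurwitz.neg {f : ℚ⟦X⟧} (hf : IsHurwitz f) : IsHurwitz (-f) := fun n => by
  obtain ⟨a, ha⟩ := hf n
  exact ⟨-a, by rw [map_neg, mul_neg, ha, Int.cast_neg]⟩

theorem IsHurwitz.sum {ι : Type*} (s : Finset ι) {f : ι → ℚ⟦X⟧}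
    (hf : ∀ i ∈ s, IsHurwitz (f i)) : IsHurwitz (∑ i ∈ s, f i) :=
  Finset.sum_induction f IsHurwitz (fun _ _ => IsHurwitz.add) isHurwitz_zero hf

theorem isHurwitz_rescale_exp (c : ℤ) : IsHurwitz (rescale (c : ℚ) (exp ℚ)) := fun n =>
  ⟨c ^ n, by
    rw [coeff_rescale, coeff_exp, Algebra.algebraMap_self, RingHom.id_apply]
    field_simp
    push_cast
    ring⟩

theorem exists_isHurwitz_mul_exp_sub_one (h : ℤ) :
    ∃ g : ℚ⟦X⟧, IsHurwitz g ∧ g * (exp ℚ - 1) = rescale (h : ℚ) (exp ℚ) - 1 := by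
  obtain ⟨m, rfl | rfl⟩ := Int.eq_nat_or_neg h
  · refine ⟨∑ k ∈ range m, rescale (0 + k : ℚ) (exp ℚ), ?_, ?_⟩
    · exact IsHurwitz.sum _ fun k _ => by simpa using isHurwitz_rescale_exp k
    · rw [sum_range_rescale_exp_mul_exp_sub_one]
      simp
  · refine ⟨-∑ k ∈ range m, rescale (-m + k : ℚ) (exp ℚ), ?_, ?_⟩
    · exact (IsHurwitz.sum _ fun k _ => by
        simpa using isHurwitz_rescale_exp (-m + k)).neg
    · rw [neg_mul, sum_range_rescale_exp_mul_exp_sub_one]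
      simp

/-- For any integer `h`, the series `(e^{hx} - 1)/(e^x - 1)` is a Hurwitz series. -/
theorem hurwitz_geom (h : ℤ) (f : PowerSeries ℚ)
    (hf : f * (PowerSeries.exp ℚ - 1) =
      PowerSeries.rescale (h : ℚ) (PowerSeries.exp ℚ) - 1) :
    IsHurwitz f := by
  obtain ⟨g, hg, hg_mul⟩ := exists_isHurwitz_mul_exp_sub_one h
  obtain rfl : f = g := mul_right_cancel₀ exp_sub_one_ne_zero (hf.trans hg_mul.symm)
  exact hg
end

section
/- For n > 1, the polynomial M_n(h,k) = ∑_{i=0}^{n−1} C(n,i) B_i h^i k^{n−i} is divisible by (k − h) in ℚ[h,k]. -/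
open MvPolynomial

/-- `M_n(h,k) = ∑_{i=0}^{n-1} C(n,i) B_i h^i k^{n-i}` as a polynomial in `h = X 0`, `k = X 1`. -/
noncomputable def M (n : ℕ) : MvPolynomial (Fin 2) ℚ :=
  ∑ i ∈ Finset.range n, C ((n.choose i : ℚ) * bernoulli i) * X 0 ^ i * X 1 ^ (n - i)

/-- For `n > 1`, `k - h` divides `M_n(h,k)`. -/
theorem M_div_k_sub_h (n : ℕ) (hn : 1 < n) :
    (X 1 - X 0 : MvPolynomial (Fin 2) ℚ) ∣ M n := by
  have hsum : ∑ i ∈ Finset.range n, ((n.choose i : ℚ) * bernoulli i) = 0 := by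
    rw [sum_bernoulli]
    simp [Nat.ne_of_gt hn]
  have hzero : (∑ i ∈ Finset.range n,
      C ((n.choose i : ℚ) * bernoulli i) * X 1 ^ i * X 1 ^ (n - i)
        : MvPolynomial (Fin 2) ℚ) = 0 := by
    have : ∀ i ∈ Finset.range n,
        (C ((n.choose i : ℚ) * bernoulli i) * X 1 ^ i * X 1 ^ (n - i)
          : MvPolynomial (Fin 2) ℚ)
        = C ((n.choose i : ℚ) * bernoulli i) * X 1 ^ n := by
      intro i hi
      rw [mul_assoc, ← pow_add, Nat.add_sub_cancel' (Finset.mem_range.mp hi).le]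
    rw [Finset.sum_congr rfl this, ← Finset.sum_mul, ← map_sum, hsum, map_zero, zero_mul]
  have key : M n = ∑ i ∈ Finset.range n,
      C ((n.choose i : ℚ) * bernoulli i) * (X 0 ^ i - X 1 ^ i) * X 1 ^ (n - i) := by
    rw [M, ← sub_zero (∑ i ∈ Finset.range n,
      C ((n.choose i : ℚ) * bernoulli i) * X 0 ^ i * X 1 ^ (n - i)), ← hzero,
      ← Finset.sum_sub_distrib]
    apply Finset.sum_congr rfl
    intro i _
    ring
  rw [key]
  apply Finset.dvd_sum
  intro i _
  have h1 : (X 1 - X 0 : MvPolynomial (Fin 2) ℚ) ∣ X 0 ^ i - X 1 ^ i := by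
    exact dvd_sub_comm.mp (sub_dvd_pow_sub_pow (X 1) (X 0 : MvPolynomial (Fin 2) ℚ) i)
  exact (h1.mul_left _).mul_right _
end

section
/- For n even and greater than 2, the polynomial B_n(u) − B_n is divisible by u^2(1−u)^2 in ℚ[u]. -/
section Helper
open Polynomial

lemma sq_sub_dvd (p : ℚ[X]) (a : ℚ) (h0 : p.eval a = 0) (h1 : p.derivative.eval a = 0) :
    (X - C a) ^ 2 ∣ p := by
  obtain ⟨q, hq⟩ := (dvd_iff_isRoot (p := p)).2 h0
  have hqa : q.eval a = 0 := by
    have hd := congrArg derivative hq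
    rw [derivative_mul, derivative_sub, derivative_X, derivative_C, sub_zero, one_mul] at hd
    have := congrArg (Polynomial.eval a) hd
    simpa [h1] using this.symm
  obtain ⟨r, hr⟩ := (dvd_iff_isRoot (p := q)).2 hqa
  exact ⟨r, by rw [hq, hr]; ring⟩

end Helper

/-- For even `n > 2`, `u^2 (1-u)^2` divides `B_n(u) - B_n` in `ℚ[u]`. -/
theorem bernoulli_sub_div (n : ℕ) (heven : Even n) (hn : 2 < n) :
    (Polynomial.X ^ 2 * (1 - Polynomial.X) ^ 2 : Polynomial ℚ) ∣
      (Polynomial.bernoulli n - Polynomial.C (bernoulli n)) := by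
  set P : Polynomial ℚ := Polynomial.bernoulli n - Polynomial.C (_root_.bernoulli n) with hP
  have hodd : Odd (n - 1) := by
    obtain ⟨k, hk⟩ := heven
    refine ⟨k - 1, ?_⟩
    omega
  have hlt : 1 < n - 1 := by omega
  have hb1 : _root_.bernoulli (n - 1) = 0 := by
    rw [bernoulli_eq_bernoulli'_of_ne_one (by omega)]
    exact bernoulli'_eq_zero_of_odd hodd hlt
  have hderiv : P.derivative = (n : Polynomial ℚ) * Polynomial.bernoulli (n - 1) := by
    rw [hP, Polynomial.derivative_sub, Polynomial.derivative_C, sub_zero, Polynomial.derivative_bernoulli]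
  have hd0 : P.derivative.eval 0 = 0 := by
    rw [hderiv]; simp [Polynomial.bernoulli_eval_zero, hb1]
  have hd1 : P.derivative.eval 1 = 0 := by
    rw [hderiv]
    simp only [Polynomial.eval_mul, Polynomial.bernoulli_eval_one]
    rw [bernoulli'_eq_zero_of_odd hodd hlt, mul_zero]
  have he0 : P.eval 0 = 0 := by
    simp [hP, Polynomial.bernoulli_eval_zero]
  have he1 : P.eval 1 = 0 := by
    simp only [hP, Polynomial.eval_sub, Polynomial.eval_C, Polynomial.bernoulli_eval_one]
    rw [bernoulli_eq_bernoulli'_of_ne_one (by omega : n ≠ 1), sub_self]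
  have d0 : (Polynomial.X - Polynomial.C (0:ℚ)) ^ 2 ∣ P := sq_sub_dvd P 0 he0 hd0
  have d1 : (Polynomial.X - Polynomial.C (1:ℚ)) ^ 2 ∣ P := sq_sub_dvd P 1 he1 hd1
  have hcop : IsCoprime ((Polynomial.X : Polynomial ℚ) - Polynomial.C 0) (Polynomial.X - Polynomial.C 1) := by
    exact ⟨1, -1, by simp⟩
  have := (hcop.pow (m := 2) (n := 2)).mul_dvd d0 d1
  have heq : (Polynomial.X - Polynomial.C (0:ℚ)) ^ 2 * (Polynomial.X - Polynomial.C 1) ^ 2 = Polynomial.X ^ 2 * (1 - Polynomial.X) ^ 2 := by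
    simp only [map_zero, map_one, sub_zero]; ring
  rwa [heq] at this
end

section
/- For every integer m ≥ 1, the function (−1)^m B_{2m}(u) is strictly increasing on the interval [0, 1/2], where B_n(u) is the n-th Bernoulli polynomial. -/
open Polynomial Set

/-- Symmetry of Bernoulli polynomials: `B_n(1-X) = (-1)^n B_n(X)`. -/
lemma bern_symm (n : ℕ) :
    (Polynomial.bernoulli n).comp (1 - X) = (-1 : ℚ[X]) ^ n * Polynomial.bernoulli n := by
  induction n with
  | zero => simp
  | succ n ih =>
    set p : ℚ[X] := (Polynomial.bernoulli (n + 1)).comp (1 - X) -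
      (-1 : ℚ[X]) ^ (n + 1) * Polynomial.bernoulli (n + 1) with hp
    have hderiv : derivative p = 0 := by
      rw [hp, derivative_sub, derivative_comp_one_sub_X,
        Polynomial.derivative_bernoulli_add_one, derivative_mul,
        Polynomial.derivative_bernoulli_add_one]
      have hmc : (((n : ℚ[X]) + 1) * Polynomial.bernoulli n).comp (1 - X)
          = ((n : ℚ[X]) + 1) * ((Polynomial.bernoulli n).comp (1 - X)) := by
        simp [mul_comp]
      rw [hmc, ih]
      have hd : derivative ((-1 : ℚ[X]) ^ (n + 1)) = 0 := by
        rw [← C_1, ← C_neg, ← C_pow, derivative_C]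
      rw [hd, zero_mul, zero_add]
      ring
    have hC : p = C (p.coeff 0) := eq_C_of_derivative_eq_zero hderiv
    have heval : p.eval 0 = 0 := by
      rw [hp]
      simp only [eval_sub, eval_comp, eval_sub, eval_one, eval_X, sub_zero, eval_mul,
        eval_pow, eval_neg, eval_one, Polynomial.bernoulli_eval_one]
      rw [bernoulli'_eq_bernoulli]
      ring_nf
      rw [Polynomial.bernoulli_eval_zero]
      ring
    have : p = 0 := by
      rw [hC] at heval ⊢
      simpa using heval
    rw [hp] at this
    exact sub_eq_zero.mp this

/-- Odd Bernoulli polynomials vanish at `1/2`. -/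
lemma bern_half {n : ℕ} (hn : Odd n) : (Polynomial.bernoulli n).eval (1 / 2 : ℚ) = 0 := by
  have h := congrArg (eval (1 / 2 : ℚ)) (bern_symm n)
  rw [eval_comp] at h
  simp only [eval_sub, eval_one, eval_X, eval_mul, eval_pow, eval_neg, hn.neg_one_pow] at h
  norm_num at h
  linarith

/-- Odd Bernoulli numbers (index > 1) vanish. -/
lemma bern_odd_zero {n : ℕ} (hn : Odd n) (h1 : n ≠ 1) : _root_.bernoulli n = 0 := by
  rw [bernoulli_eq_bernoulli'_of_ne_one h1]
  refine bernoulli'_eq_zero_of_odd hn ?_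
  obtain ⟨k, rfl⟩ := hn
  omega


/-- Differentiability of `u ↦ B_n(u)` over `ℝ`. -/
lemma bern_diff (n : ℕ) : Differentiable ℝ fun u : ℝ => aeval u (Polynomial.bernoulli n) :=
  (Polynomial.bernoulli n).differentiable_aeval

/-- Derivative of `u ↦ B_{n+1}(u)`. -/
lemma bern_deriv (n : ℕ) (u : ℝ) :
    deriv (fun u : ℝ => aeval u (Polynomial.bernoulli (n + 1))) u
      = (n + 1 : ℝ) * aeval u (Polynomial.bernoulli n) := by
  rw [Polynomial.deriv_aeval, Polynomial.derivative_bernoulli_add_one]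
  simp [map_mul]

/-- Evaluation over ℝ at rational points. -/
lemma bern_aeval_rat (n : ℕ) (q : ℚ) :
    aeval (q : ℝ) (Polynomial.bernoulli n) = (((Polynomial.bernoulli n).eval q : ℚ) : ℝ) := by
  have := aeval_algebraMap_apply_eq_algebraMap_eval (A := ℝ) q (Polynomial.bernoulli n)
  simpa using this

/-- Key sign lemma: `(-1)^{m+1} B_{2m+1}(u) > 0` on `(0, 1/2)`. -/
lemma bern_key (m : ℕ) : ∀ u ∈ Set.Ioo (0 : ℝ) (1 / 2),
    0 < (-1 : ℝ) ^ (m + 1) * aeval u (Polynomial.bernoulli (2 * m + 1)) := by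
  induction m with
  | zero =>
    intro u hu
    have hb1 : (Polynomial.bernoulli 1 : ℚ[X]) = X - C (1 / 2) := by
      simp [Polynomial.bernoulli, Finset.sum_range_succ, _root_.bernoulli_one]
      rw [Polynomial.monomial_one_one_eq_X, show ((-1 : ℚ) / 2) = -(1 / 2) by norm_num,
        map_neg, sub_eq_add_neg]
      norm_num
    have hval : aeval u (Polynomial.bernoulli (2 * 0 + 1)) = u - 1 / 2 := by
      rw [show 2 * 0 + 1 = 1 by norm_num, hb1]
      simp
    rw [hval]
    obtain ⟨h1, h2⟩ := hu
    nlinarith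
  | succ m ih =>
    -- h := (-1)^{m+1} B_{2m+2} is strictly monotone on [0, 1/2]
    have hmono : StrictMonoOn
        (fun u : ℝ => (-1 : ℝ) ^ (m + 1) * aeval u (Polynomial.bernoulli (2 * m + 2)))
        (Set.Icc (0 : ℝ) (1 / 2)) := by
      apply strictMonoOn_of_deriv_pos (convex_Icc _ _)
      · exact (((bern_diff (2 * m + 2)).const_mul _).continuous).continuousOn
      · intro x hx
        rw [interior_Icc] at hx
        rw [deriv_const_mul _ ((bern_diff (2 * m + 2)) x), bern_deriv (2 * m + 1) x]
        have := ih x hx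
        have h23 : (0 : ℝ) < (2 * m + 1 : ℕ) + 1 := by positivity
        calc (0:ℝ) < ((2 * m + 1 : ℕ) + 1) * ((-1 : ℝ) ^ (m + 1)
              * aeval x (Polynomial.bernoulli (2 * m + 1))) := by positivity
          _ = (-1 : ℝ) ^ (m + 1) * (((2 * m + 1 : ℕ) : ℝ) + 1)
              * aeval x (Polynomial.bernoulli (2 * m + 1)) := by ring
          _ = _ := by push_cast; ring
    -- g := (-1)^{m+2} B_{2m+3}
    set g : ℝ → ℝ := fun u => (-1 : ℝ) ^ (m + 2) * aeval u (Polynomial.bernoulli (2 * m + 3))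
      with hg
    have hganti : StrictAntiOn (deriv g) (interior (Set.Icc (0 : ℝ) (1 / 2))) := by
      rw [interior_Icc]
      intro x hx y hy hxy
      rw [hg]
      rw [deriv_const_mul _ ((bern_diff (2 * m + 3)) x),
        deriv_const_mul _ ((bern_diff (2 * m + 3)) y),
        bern_deriv (2 * m + 2) x, bern_deriv (2 * m + 2) y]
      have hlt := hmono ⟨le_of_lt hx.1, le_of_lt hx.2⟩ ⟨le_of_lt hy.1, le_of_lt hy.2⟩ hxy
      simp only at hlt
      have hp2 : ((-1 : ℝ) ^ (m + 2)) = -((-1 : ℝ) ^ (m + 1)) := by ring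
      have hc : (0 : ℝ) < ((2 * m + 2 : ℕ) : ℝ) + 1 := by positivity
      rw [hp2]
      nlinarith
    have hconc : StrictConcaveOn ℝ (Set.Icc (0 : ℝ) (1 / 2)) g :=
      StrictAntiOn.strictConcaveOn_of_deriv (convex_Icc _ _)
        (((bern_diff (2 * m + 3)).const_mul _).continuous).continuousOn hganti
    have hz : aeval (0 : ℝ) (Polynomial.bernoulli (2 * m + 3)) = 0 := by
      have h := bern_aeval_rat (2 * m + 3) 0
      rw [Polynomial.bernoulli_eval_zero, bern_odd_zero ⟨m + 1, by omega⟩ (by omega)] at h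
      simpa using h
    have hh : aeval ((1 : ℝ) / 2) (Polynomial.bernoulli (2 * m + 3)) = 0 := by
      have h := bern_aeval_rat (2 * m + 3) (1 / 2)
      rw [bern_half ⟨m + 1, by omega⟩] at h
      norm_num at h ⊢
      exact h
    have hg0 : g 0 = 0 := by rw [hg]; simp only [hz, mul_zero]
    have hghalf : g (1 / 2) = 0 := by rw [hg]; simp only [hh, mul_zero]
    intro u hu
    obtain ⟨hu1, hu2⟩ := hu
    have ha : (0 : ℝ) < 1 - 2 * u := by linarith
    have hb : (0 : ℝ) < 2 * u := by linarith
    have hab : (1 - 2 * u) + 2 * u = 1 := by ring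
    have key := hconc.2 (Set.left_mem_Icc.mpr (by norm_num : (0:ℝ) ≤ 1 / 2))
      (Set.right_mem_Icc.mpr (by norm_num : (0:ℝ) ≤ 1 / 2))
      (by norm_num : (0:ℝ) ≠ 1 / 2) ha hb hab
    rw [hg0, hghalf] at key
    simp only [smul_eq_mul, mul_zero, add_zero, zero_add] at key
    have hpt : 2 * u * (1 / 2 : ℝ) = u := by ring
    rw [hpt] at key
    have hidx : 2 * (m + 1) + 1 = 2 * m + 3 := by omega
    rw [hidx]
    exact key

/-- For `m ≥ 1`, `(-1)^m B_{2m}(u)` is strictly increasing on `[0, 1/2]`. -/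
theorem bernoulli_even_strictMonoOn (m : ℕ) (hm : 1 ≤ m) :
    StrictMonoOn
      (fun u : ℝ => (-1 : ℝ) ^ m * Polynomial.aeval u (Polynomial.bernoulli (2 * m)))
      (Set.Icc (0 : ℝ) (1 / 2)) := by
  obtain ⟨k, rfl⟩ : ∃ k, m = k + 1 := ⟨m - 1, by omega⟩
  apply strictMonoOn_of_deriv_pos (convex_Icc _ _)
  · exact (((bern_diff (2 * (k + 1))).const_mul _).continuous).continuousOn
  · intro x hx
    rw [interior_Icc] at hx
    have h2 : 2 * (k + 1) = (2 * k + 1) + 1 := by omega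
    rw [deriv_const_mul _ ((bern_diff (2 * (k + 1))) x), h2, bern_deriv (2 * k + 1) x]
    have hkey := bern_key k x hx
    have hc : (0 : ℝ) < ((2 * k + 1 : ℕ) : ℝ) + 1 := by positivity
    calc (0:ℝ) < (((2 * k + 1 : ℕ) : ℝ) + 1) * ((-1 : ℝ) ^ (k + 1)
          * aeval x (Polynomial.bernoulli (2 * k + 1))) := by positivity
      _ = (-1 : ℝ) ^ (k + 1) * ((((2 * k + 1 : ℕ) : ℝ) + 1)
          * aeval x (Polynomial.bernoulli (2 * k + 1))) := by ring
end

section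
/- If n is even and positive and 0 < u < 1, then (−1)^{⌈n/2⌉}(B_n(u) − B_n) > 0; if furthermore n is divisible by 4, then B_n(u) − B_n ≥ 0 for all real u. -/
/-!
Subtracting the cosine series of `B_{2k}(x)` at `x = 0` from that at `x` gives, for `x ∈ [0, 1]`,
`(-1)^k (B_{2k}(x) - B_{2k}) = 2 (2k)! / (2π)^{2k} · ∑_{m ≥ 1} (1 - cos 2πmx) / m^{2k}`,
a sum of non-negative terms whose `m = 1` term is positive for `0 < x < 1`.
When `4 ∣ n`, the bound `B_n(x) ≥ B_n` on `[0, 1]` spreads to `x ≥ 0` through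
`B_n(x + 1) = B_n(x) + n x^{n-1}`, and to `x < 0` through the symmetry `B_n(1 - x) = B_n(x)`.
-/

open Real Set Nat

theorem aeval_bernoulli_eq_bernoulliFun (n : ℕ) (x : ℝ) :
    Polynomial.aeval x (Polynomial.bernoulli n) = bernoulliFun n x := by
  rw [bernoulliFun, Polynomial.aeval_def, Polynomial.eval_map]

theorem bernoulliFun_one_add (n : ℕ) (x : ℝ) :
    bernoulliFun n (1 + x) = bernoulliFun n x + n * x ^ (n - 1) := by
  simpa [← aeval_bernoulli_eq_bernoulliFun, Polynomial.aeval_comp]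
    using congr_arg (Polynomial.aeval x) (Polynomial.bernoulli_comp_one_add_X n)

theorem bernoulliFun_le_add_natCast (n : ℕ) {x : ℝ} (hx : 0 ≤ x) (m : ℕ) :
    bernoulliFun n x ≤ bernoulliFun n (x + m) := by
  induction m with
  | zero => simp
  | succ m ih =>
    have hstep := bernoulliFun_one_add n (x + m)
    rw [show 1 + (x + m) = x + ↑(m + 1) by push_cast; ring] at hstep
    have hincr : 0 ≤ (n : ℝ) * (x + m) ^ (n - 1) := by positivity
    linarith

theorem bernoulliFun_fract_le (n : ℕ) {x : ℝ} (hx : 0 ≤ x) :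
    bernoulliFun n (Int.fract x) ≤ bernoulliFun n x := by
  have hx' : x = Int.fract x + ⌊x⌋₊ := by
    rw [natCast_floor_eq_intCast_floor hx, Int.fract_add_floor]
  conv_rhs => rw [hx']
  exact bernoulliFun_le_add_natCast n (Int.fract_nonneg x) _

theorem bernoulli_le_bernoulliFun_of_even {n : ℕ} (hn : Even n)
    (h : ∀ x ∈ Icc (0 : ℝ) 1, (bernoulli n : ℝ) ≤ bernoulliFun n x) (x : ℝ) :
    (bernoulli n : ℝ) ≤ bernoulliFun n x := by
  wlog hx : 0 ≤ x generalizing x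
  · have := this (1 - x) (by linarith)
    rwa [bernoulliFun_eval_one_sub, hn.neg_one_pow, one_mul] at this
  exact (h _ ⟨Int.fract_nonneg x, (Int.fract_lt_one x).le⟩).trans (bernoulliFun_fract_le n hx)

theorem hasSum_one_sub_cos_div_pow {k : ℕ} (hk : k ≠ 0) {x : ℝ} (hx : x ∈ Icc (0 : ℝ) 1) :
    HasSum (fun m : ℕ => (1 - cos (2 * π * m * x)) / (m : ℝ) ^ (2 * k))
      ((2 * π) ^ (2 * k) / 2 / (2 * k)! *
        ((-1) ^ k * (bernoulliFun (2 * k) x - bernoulli (2 * k)))) := by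
  have h0 := hasSum_one_div_nat_pow_mul_cos hk (left_mem_Icc.mpr zero_le_one)
  have hx := hasSum_one_div_nat_pow_mul_cos hk hx
  rw [← bernoulliFun, bernoulliFun_eval_zero] at h0
  rw [← bernoulliFun] at hx
  simp only [mul_zero, cos_zero, mul_one] at h0
  convert h0.sub hx using 2
  · rfl
  · ring
  · ring

theorem one_sub_cos_div_pow_nonneg (k : ℕ) (x : ℝ) (m : ℕ) :
    0 ≤ (1 - cos (2 * π * m * x)) / (m : ℝ) ^ (2 * k) :=
  div_nonneg (sub_nonneg.mpr (cos_le_one _)) (by positivity)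

theorem cos_two_pi_mul_lt_one {x : ℝ} (hx₀ : 0 < x) (hx₁ : x < 1) : cos (2 * π * x) < 1 := by
  refine (cos_le_one _).lt_of_ne fun h => ?_
  rw [cos_eq_one_iff_of_lt_of_lt (by nlinarith [pi_pos]) (by nlinarith [pi_pos])] at h
  nlinarith [pi_pos]

theorem neg_one_pow_mul_bernoulliFun_sub_nonneg {k : ℕ} (hk : k ≠ 0) {x : ℝ}
    (hx : x ∈ Icc (0 : ℝ) 1) :
    0 ≤ (-1) ^ k * (bernoulliFun (2 * k) x - bernoulli (2 * k)) := by
  have hsum := (hasSum_one_sub_cos_div_pow hk hx).nonneg (one_sub_cos_div_pow_nonneg k x)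
  exact nonneg_of_mul_nonneg_right hsum (by positivity)

theorem neg_one_pow_mul_bernoulliFun_sub_pos {k : ℕ} (hk : k ≠ 0) {x : ℝ}
    (hx₀ : 0 < x) (hx₁ : x < 1) :
    0 < (-1) ^ k * (bernoulliFun (2 * k) x - bernoulli (2 * k)) := by
  have hsum := hasSum_lt (i := 1) (one_sub_cos_div_pow_nonneg k x)
    (by simpa using cos_two_pi_mul_lt_one hx₀ hx₁) hasSum_zero
    (hasSum_one_sub_cos_div_pow hk ⟨hx₀.le, hx₁.le⟩)
  exact pos_of_mul_pos_right hsum (by positivity)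

/-- For even positive `n` and `0 < u < 1`, `(-1)^{⌈n/2⌉} (B_n(u) - B_n) > 0`;
if moreover `4 ∣ n`, then `B_n(u) - B_n ≥ 0` for all real `u`. -/
theorem bernoulli_sub_pos (n : ℕ) (heven : Even n) (hn : 0 < n) :
    (∀ u : ℝ, 0 < u → u < 1 →
        0 < (-1 : ℝ) ^ (n / 2) *
          (Polynomial.aeval u (Polynomial.bernoulli n) - (bernoulli n : ℝ))) ∧
    (4 ∣ n → ∀ u : ℝ,
        0 ≤ Polynomial.aeval u (Polynomial.bernoulli n) - (bernoulli n : ℝ)) := by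
  obtain ⟨k, rfl⟩ : ∃ k, n = 2 * k := heven.exists_two_nsmul n
  have hk : k ≠ 0 := by omega
  simp only [aeval_bernoulli_eq_bernoulliFun, sub_nonneg]
  refine ⟨fun u hu₀ hu₁ => ?_, fun h4 u => ?_⟩
  · rw [Nat.mul_div_cancel_left k two_pos]
    exact neg_one_pow_mul_bernoulliFun_sub_pos hk hu₀ hu₁
  · have hk_even : Even k := even_iff_two_dvd.mpr (by omega)
    refine bernoulli_le_bernoulliFun_of_even (even_two_mul k) (fun x hx => ?_) u
    simpa [hk_even.neg_one_pow] using neg_one_pow_mul_bernoulliFun_sub_nonneg hk hx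
end

section
/- Let j be a positive integer and h, k integers such that every prime divisor of j divides h or divides k. Then for all n, the number ∑_{i=0}^{n−j} C(n,i) h^{n−i} S(n−i, j) k^i B_i is an integer, where S(m,j) are Stirling numbers of the second kind and B_i the Bernoulli numbers. -/
/-- Stirling numbers of the second kind. -/
def stirling2 : ℕ → ℕ → ℕ
  | 0, 0 => 1
  | 0, _ + 1 => 0
  | _ + 1, 0 => 0
  | n + 1, j + 1 => (j + 1) * stirling2 n (j + 1) + stirling2 n j

open Finset

lemma stirling2_zero_right : ∀ n, 0 < n → stirling2 n 0 = 0
  | _ + 1, _ => rfl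

lemma stirling2_eq_zero : ∀ {n m : ℕ}, n < m → stirling2 n m = 0
  | 0, _ + 1, _ => rfl
  | n + 1, m + 1, h => by
    have h1 : n < m + 1 := by omega
    have h2 : n < m := by omega
    show (m + 1) * stirling2 n (m + 1) + stirling2 n m = 0
    rw [stirling2_eq_zero h1, stirling2_eq_zero h2]
    simp

lemma stirling2_succ_succ (n m : ℕ) :
    stirling2 (n + 1) (m + 1) = (m + 1) * stirling2 n (m + 1) + stirling2 n m := rfl

lemma stirling2_zero_left : ∀ m, stirling2 0 m = if m = 0 then 1 else 0
  | 0 => rfl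
  | _ + 1 => rfl

/-- I1: `∑_{s≤m} (-1)^s C(m,s) s^i = (-1)^m * m! * S(i,m)` over ℤ. -/
lemma sum_sign_choose_pow (i : ℕ) : ∀ m : ℕ,
    ∑ s ∈ range (m + 1), (-1) ^ s * (m.choose s) * (s : ℤ) ^ i
      = (-1) ^ m * ((m.factorial : ℤ) * stirling2 i m) := by
  induction i with
  | zero =>
    intro m
    have h : ∑ s ∈ range (m + 1), ((-1) ^ s * (m.choose s) * (s:ℤ) ^ 0)
        = (-1 + 1) ^ m := by
      rw [add_pow]
      refine Finset.sum_congr rfl fun s hs => by rw [one_pow, pow_zero]; ring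
    rw [h]
    cases m with
    | zero => simp [stirling2]
    | succ m => simp [stirling2_zero_left, zero_pow]
  | succ i ih =>
    intro m
    cases m with
    | zero => simp [stirling2_zero_right, Nat.pos_of_ne_zero]
    | succ m =>
      have key : ∀ s ∈ range (m + 1 + 1), (-1:ℤ) ^ s * ((m+1).choose s) * (s : ℤ) ^ (i+1)
          = (m + 1 : ℤ) * ((-1) ^ s * ((m+1).choose s) * (s:ℤ) ^ i)
            - (m + 1 : ℤ) * ((-1) ^ s * (m.choose s) * (s:ℤ) ^ i) := by
        intro s _
        have hid : (s : ℤ) * ((m+1).choose s)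
            = (m+1:ℤ) * ((m+1).choose s) - (m+1:ℤ) * (m.choose s) := by
          cases s with
          | zero => simp
          | succ s =>
            have h2 : (m + 1) * m.choose s = (m+1).choose (s+1) * (s+1) :=
              Nat.add_one_mul_choose_eq m s
            have h1 : (m+1).choose (s+1) = m.choose s + m.choose (s+1) :=
              Nat.choose_succ_succ m s
            have h2' := congrArg (fun x : ℕ => (x : ℤ)) h2
            have h1' := congrArg (fun x : ℕ => (x : ℤ)) h1
            push_cast at h2' h1'
            push_cast
            nlinarith [h2', h1']
        calc (-1:ℤ) ^ s * ((m+1).choose s) * (s : ℤ) ^ (i+1)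
            = ((s:ℤ) * ((m+1).choose s)) * ((-1)^s * (s:ℤ)^i) := by ring
          _ = ((m+1:ℤ) * ((m+1).choose s) - (m+1:ℤ) * (m.choose s)) * ((-1)^s * (s:ℤ)^i) := by
              rw [hid]
          _ = _ := by ring
      rw [Finset.sum_congr rfl key, Finset.sum_sub_distrib, ← Finset.mul_sum, ← Finset.mul_sum]
      have e2 : ∑ s ∈ range (m + 1 + 1), (-1:ℤ) ^ s * (m.choose s) * (s:ℤ) ^ i
          = (-1)^m * ((m.factorial : ℤ) * stirling2 i m) := by
        rw [Finset.sum_range_succ, Nat.choose_succ_self, ih m]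
        push_cast
        ring
      rw [ih (m+1), e2, stirling2_succ_succ]
      push_cast [Nat.factorial_succ, pow_succ]
      ring

/-- I2: `b^i = ∑_{r≤i} C(b,r) * r! * S(i,r)` over ℤ. -/
lemma pow_eq_sum_choose (b : ℕ) : ∀ i : ℕ,
    ((b : ℤ)) ^ i = ∑ r ∈ range (i + 1), (b.choose r : ℤ) * r.factorial * stirling2 i r := by
  intro i
  induction i with
  | zero => simp [stirling2]
  | succ i ih =>
    have hbc : ∀ r : ℕ, (b:ℤ) * (b.choose r)
        = ((r:ℤ)+1) * (b.choose (r+1)) + (r:ℤ) * (b.choose r) := by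
      intro r
      rcases le_or_gt r b with hrb | hrb
      · have h := Nat.choose_succ_right_eq b r
        have h' := congrArg (fun x : ℕ => (x:ℤ)) h
        push_cast [hrb] at h'
        linarith [h']
      · have h1 : b.choose (r+1) = 0 := Nat.choose_eq_zero_of_lt (by omega)
        have h2 : b.choose r = 0 := Nat.choose_eq_zero_of_lt hrb
        rw [h1, h2]; simp
    have hL : (b:ℤ)^(i+1)
        = ∑ r ∈ range (i+1), ((b.choose (r+1) : ℤ) * (r+1).factorial * stirling2 i r)
          + ∑ r ∈ range (i+1), ((b.choose r : ℤ) * r.factorial * r * stirling2 i r) := by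
      rw [pow_succ, ih, ← Finset.sum_add_distrib, Finset.sum_mul]
      refine Finset.sum_congr rfl fun r _ => ?_
      have h := hbc r
      push_cast [Nat.factorial_succ]
      linear_combination ((r.factorial : ℤ) * (stirling2 i r : ℤ)) * h
    have hswap : ∑ s ∈ range (i+1),
          ((b.choose (s+1) : ℤ) * (s+1).factorial * (((s:ℤ)+1) * stirling2 i (s+1)))
        = ∑ r ∈ range (i+1), ((b.choose r : ℤ) * r.factorial * r * stirling2 i r) := by
      set g : ℕ → ℤ := fun r => (b.choose r : ℤ) * r.factorial * r * stirling2 i r with hg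
      have h1 := Finset.sum_range_succ' g (i+1)
      have h2 := Finset.sum_range_succ g (i+1)
      have hg0 : g 0 = 0 := by simp [hg]
      have hgtop : g (i+1) = 0 := by
        simp [hg, stirling2_eq_zero (Nat.lt_succ_self i)]
      have h3 : ∑ s ∈ range (i+1), g (s+1) = ∑ r ∈ range (i+1), g r := by
        rw [hg0, add_zero] at h1
        rw [hgtop, add_zero] at h2
        rw [← h1, h2]
      calc ∑ s ∈ range (i+1), ((b.choose (s+1) : ℤ) * (s+1).factorial * (((s:ℤ)+1) * stirling2 i (s+1)))
          = ∑ s ∈ range (i+1), g (s+1) := by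
            refine Finset.sum_congr rfl fun s _ => ?_
            simp only [hg]
            push_cast
            ring
        _ = ∑ r ∈ range (i+1), g r := h3
    have hR : ∑ r ∈ range (i+1+1), (b.choose r : ℤ) * r.factorial * stirling2 (i+1) r
        = ∑ s ∈ range (i+1), ((b.choose (s+1) : ℤ) * (s+1).factorial * (((s:ℤ)+1) * stirling2 i (s+1))
            + (b.choose (s+1) : ℤ) * (s+1).factorial * stirling2 i s) := by
      rw [Finset.sum_range_succ']
      have h0 : (b.choose 0 : ℤ) * ((Nat.factorial 0 : ℕ) : ℤ) * stirling2 (i+1) 0 = 0 := by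
        simp [stirling2_zero_right]
      rw [h0, add_zero]
      refine Finset.sum_congr rfl fun s _ => ?_
      rw [stirling2_succ_succ]
      push_cast
      ring
    rw [hL, ← hswap, hR, ← Finset.sum_add_distrib]
    refine Finset.sum_congr rfl fun s _ => ?_
    ring

/-- Sb: `∑_{i≤n} C(n,i) S(i,m) = S(n+1,m+1)` over ℤ. -/
lemma sum_choose_stirling2 : ∀ n : ℕ, ∀ m : ℕ,
    ∑ i ∈ range (n + 1), ((n.choose i : ℤ)) * stirling2 i m = stirling2 (n+1) (m+1) := by
  intro n
  induction n with
  | zero =>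
    intro m
    cases m <;> simp [stirling2, stirling2_zero_left]
  | succ n ih =>
    intro m
    rw [Finset.sum_range_succ']
    have hsplit : ∀ x ∈ range (n+1), (((n+1).choose (x+1) : ℤ)) * stirling2 (x+1) m
        = (n.choose x : ℤ) * stirling2 (x+1) m + (n.choose (x+1) : ℤ) * stirling2 (x+1) m := by
      intro x _
      rw [Nat.choose_succ_succ]
      push_cast
      ring
    rw [Finset.sum_congr rfl hsplit, Finset.sum_add_distrib]
    have hB : (∑ x ∈ range (n+1), ((n.choose (x+1)):ℤ) * stirling2 (x+1) m)
          + ((n+1).choose 0 : ℤ) * stirling2 0 m = stirling2 (n+1) (m+1) := by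
      have key : (∑ x ∈ range (n+1), ((n.choose (x+1)):ℤ) * stirling2 (x+1) m)
          + ((n+1).choose 0 : ℤ) * stirling2 0 m
          = ∑ i ∈ range (n+1), ((n.choose i : ℤ)) * stirling2 i m := by
        rw [Finset.sum_range_succ' (fun i => ((n.choose i : ℤ)) * stirling2 i m) n]
        rw [Finset.sum_range_succ]
        simp [Nat.choose_succ_self]
      rw [key, ih m]
    have hA : ∑ x ∈ range (n+1), ((n.choose x):ℤ) * stirling2 (x+1) m
        = (m:ℤ) * stirling2 (n+1) (m+1) + stirling2 (n+1) m := by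
      cases m with
      | zero =>
        have hz : ∀ x ∈ range (n+1), ((n.choose x):ℤ) * stirling2 (x+1) 0 = 0 := by
          intro x _
          simp [stirling2_zero_right]
        rw [Finset.sum_congr rfl hz]
        simp [stirling2_zero_right]
      | succ m' =>
        have hrec : ∀ x ∈ range (n+1), ((n.choose x):ℤ) * stirling2 (x+1) (m'+1)
            = ((m':ℤ)+1) * (((n.choose x):ℤ) * stirling2 x (m'+1))
              + ((n.choose x):ℤ) * stirling2 x m' := by
          intro x _
          rw [stirling2_succ_succ]
          push_cast
          ring
        rw [Finset.sum_congr rfl hrec, Finset.sum_add_distrib, ← Finset.mul_sum,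
          ih m', ih (m'+1)]
        push_cast
        ring
    rw [stirling2_succ_succ (n+1) m]
    push_cast
    push_cast at hA hB
    linarith [hA, hB]

/-- Candidate Bernoulli numbers. -/
noncomputable def bcand (i : ℕ) : ℚ :=
  ∑ m ∈ range (i + 1), (-1:ℚ)^m * m.factorial * stirling2 i m / (m+1)

lemma alt_fact_stirling (n : ℕ) (hn : 1 ≤ n) :
    ∑ m ∈ range (n + 1), (-1:ℚ)^m * m.factorial * stirling2 n (m+1)
      = if n = 1 then 1 else 0 := by
  match n, hn with
  | 1, _ =>
    rw [Finset.sum_range_succ, Finset.sum_range_succ, Finset.sum_range_zero]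
    have h1 : stirling2 1 1 = 1 := rfl
    have h2 : stirling2 1 2 = 0 := stirling2_eq_zero (by norm_num)
    rw [h1, h2]
    norm_num
  | (n+2), _ =>
    have hrec : ∀ m ∈ range (n+3), (-1:ℚ)^m * m.factorial * stirling2 (n+2) (m+1)
        = (-1:ℚ)^m * (m+1).factorial * stirling2 (n+1) (m+1)
          + (-1:ℚ)^m * m.factorial * stirling2 (n+1) m := by
      intro m _
      rw [stirling2_succ_succ (n+1) m]
      push_cast [Nat.factorial_succ]
      ring
    rw [Finset.sum_congr rfl hrec, Finset.sum_add_distrib]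
    have hS1 : ∑ m ∈ range (n+3), (-1:ℚ)^m * (m+1).factorial * stirling2 (n+1) (m+1)
        = ∑ m ∈ range (n+2), (-1:ℚ)^m * (m+1).factorial * stirling2 (n+1) (m+1) := by
      rw [Finset.sum_range_succ, stirling2_eq_zero (by omega : n+1 < n+3)]
      simp
    have hS2 : ∑ m ∈ range (n+3), (-1:ℚ)^m * m.factorial * stirling2 (n+1) m
        = - ∑ m ∈ range (n+2), (-1:ℚ)^m * (m+1).factorial * stirling2 (n+1) (m+1) := by
      rw [Finset.sum_range_succ' (fun m => (-1:ℚ)^m * m.factorial * stirling2 (n+1) m) (n+2)]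
      rw [stirling2_zero_right (n+1) (by omega)]
      have hneg : ∀ x ∈ range (n+2), (-1:ℚ)^(x+1) * ((x+1).factorial : ℚ) * stirling2 (n+1) (x+1)
          = -((-1:ℚ)^x * ((x+1).factorial : ℚ) * stirling2 (n+1) (x+1)) := by
        intro x _
        rw [pow_succ]
        ring
      rw [Finset.sum_congr rfl hneg, Finset.sum_neg_distrib]
      simp
    rw [hS1, hS2]
    simp [Nat.succ_ne_zero]

lemma bcand_recurrence (n : ℕ) :
    ∑ r ∈ range n, (n.choose r : ℚ) * bcand r = if n = 1 then 1 else 0 := by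
  cases n with
  | zero => simp
  | succ n0 =>
    have hstep : ∀ r ∈ range (n0+1), ((n0+1).choose r : ℚ) * bcand r
        = ∑ m ∈ range (n0+1),
            ((n0+1).choose r : ℚ) * ((-1:ℚ)^m * m.factorial * stirling2 r m / (m+1)) := by
      intro r hr
      simp only [mem_range] at hr
      unfold bcand
      rw [Finset.mul_sum]
      apply Finset.sum_subset (Finset.range_subset_range.mpr (by omega))
      intro m _ hm
      simp only [mem_range, not_lt] at hm
      rw [stirling2_eq_zero (by omega : r < m)]
      simp
    rw [Finset.sum_congr rfl hstep, Finset.sum_comm]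
    have hinner : ∀ m ∈ range (n0+1),
        ∑ r ∈ range (n0+1), ((n0+1).choose r : ℚ) * ((-1:ℚ)^m * m.factorial * stirling2 r m / (m+1))
          = (-1:ℚ)^m * m.factorial * stirling2 (n0+1) (m+1) := by
      intro m _
      have hsb := sum_choose_stirling2 (n0+1) m
      rw [Finset.sum_range_succ, Nat.choose_self] at hsb
      push_cast at hsb
      have hsum : ∑ r ∈ range (n0+1), ((n0+1).choose r : ℤ) * stirling2 r m
          = (stirling2 (n0+1+1) (m+1) : ℤ) - stirling2 (n0+1) m := by linarith [hsb]
      have hq : ∑ r ∈ range (n0+1), ((n0+1).choose r : ℚ) * (stirling2 r m : ℚ)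
          = ((stirling2 (n0+1+1) (m+1) : ℚ)) - (stirling2 (n0+1) m : ℚ) := by
        have := congrArg (fun z : ℤ => (z : ℚ)) hsum
        push_cast at this
        convert this using 2
      have hrec : (stirling2 (n0+1+1) (m+1) : ℚ) - (stirling2 (n0+1) m : ℚ)
          = ((m:ℚ)+1) * stirling2 (n0+1) (m+1) := by
        rw [stirling2_succ_succ (n0+1) m]
        push_cast
        ring
      have hm1 : ((m:ℚ)+1) ≠ 0 := by positivity
      calc ∑ r ∈ range (n0+1), ((n0+1).choose r : ℚ) * ((-1:ℚ)^m * m.factorial * stirling2 r m / (m+1))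
          = ((-1:ℚ)^m * m.factorial / (m+1)) *
              ∑ r ∈ range (n0+1), ((n0+1).choose r : ℚ) * (stirling2 r m : ℚ) := by
            rw [Finset.mul_sum]
            refine Finset.sum_congr rfl fun r _ => ?_
            ring
        _ = ((-1:ℚ)^m * m.factorial / (m+1)) * (((m:ℚ)+1) * stirling2 (n0+1) (m+1)) := by
            rw [hq, hrec]
        _ = (-1:ℚ)^m * m.factorial * stirling2 (n0+1) (m+1) := by
            field_simp
    have hext : ∑ m ∈ range (n0+2), (-1:ℚ)^m * m.factorial * stirling2 (n0+1) (m+1)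
        = ∑ m ∈ range (n0+1), (-1:ℚ)^m * m.factorial * stirling2 (n0+1) (m+1) := by
      rw [Finset.sum_range_succ, stirling2_eq_zero (by omega : n0+1 < n0+1+1)]
      simp
    rw [Finset.sum_congr rfl hinner, ← hext, alt_fact_stirling (n0+1) (by omega)]

lemma bernoulli_eq_bcand : ∀ i, bernoulli i = bcand i := by
  intro i
  induction i using Nat.strong_induction_on with
  | _ i ih =>
    have h1 := sum_bernoulli (i+1)
    have h2 := bcand_recurrence (i+1)
    rw [Finset.sum_range_succ] at h1 h2
    have h3 : ∑ r ∈ range i, ((i+1).choose r : ℚ) * bernoulli r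
        = ∑ r ∈ range i, ((i+1).choose r : ℚ) * bcand r :=
      Finset.sum_congr rfl fun r hr => by rw [ih r (mem_range.mp hr)]
    have hc : ((i+1).choose i : ℚ) ≠ 0 := by
      rw [Nat.choose_succ_self_right]
      positivity
    have h4 : ((i+1).choose i : ℚ) * bernoulli i = ((i+1).choose i : ℚ) * bcand i := by
      rw [h3] at h1
      linarith [h1, h2]
    exact mul_left_cancel₀ hc h4

/-- The inner integer sum `D_m`. -/
def Dint (n j : ℕ) (h k : ℤ) (m : ℕ) : ℤ :=
  ∑ i ∈ range (n+1), (n.choose i : ℤ) * h^(n-i) * stirling2 (n-i) j * k^i * stirling2 i m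

lemma neg_one_sq_pow (a : ℕ) : (-1:ℤ)^a * (-1)^a = 1 := by
  rw [← mul_pow]; norm_num

lemma neg_one_pow_sub' {s j : ℕ} (h : s ≤ j) : (-1:ℤ)^(j-s) = (-1)^j * (-1)^s := by
  have h1 : (-1:ℤ)^(j-s) * (-1)^s = (-1)^j := by
    rw [← pow_add]; congr 1; omega
  calc (-1:ℤ)^(j-s) = (-1)^(j-s) * ((-1)^s * (-1)^s) := by rw [neg_one_sq_pow, mul_one]
    _ = ((-1)^(j-s) * (-1)^s) * (-1)^s := by ring
    _ = (-1)^j * (-1)^s := by rw [h1]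

lemma star (n j m : ℕ) (h k : ℤ) :
    ((j.factorial : ℤ) * m.factorial) * Dint n j h k m
      = (-1:ℤ)^j * (-1)^m * ∑ s ∈ range (j+1), ∑ t ∈ range (m+1),
          (-1:ℤ)^s * (-1)^t * (j.choose s) * (m.choose t) * ((s:ℤ)*h + (t:ℤ)*k)^n := by
  have hT3 : ∑ i ∈ range (n+1), ∑ s ∈ range (j+1), ∑ t ∈ range (m+1),
        ((n.choose i : ℤ) * h^(n-i) * k^i
          * ((-1:ℤ)^s * (j.choose s) * (s:ℤ)^(n-i))
          * ((-1:ℤ)^t * (m.choose t) * (t:ℤ)^i))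
      = (-1:ℤ)^j * (-1)^m * (((j.factorial : ℤ) * m.factorial) * Dint n j h k m) := by
    unfold Dint
    rw [Finset.mul_sum, Finset.mul_sum]
    refine Finset.sum_congr rfl fun i _ => ?_
    have e1 : ∑ s ∈ range (j+1), ∑ t ∈ range (m+1),
          ((n.choose i : ℤ) * h^(n-i) * k^i
            * ((-1:ℤ)^s * (j.choose s) * (s:ℤ)^(n-i))
            * ((-1:ℤ)^t * (m.choose t) * (t:ℤ)^i))
        = ((n.choose i : ℤ) * h^(n-i) * k^i) *
            ((∑ s ∈ range (j+1), (-1:ℤ)^s * (j.choose s) * (s:ℤ)^(n-i))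
              * (∑ t ∈ range (m+1), (-1:ℤ)^t * (m.choose t) * (t:ℤ)^i)) := by
      rw [Finset.sum_mul_sum, Finset.mul_sum]
      refine Finset.sum_congr rfl fun s _ => ?_
      rw [Finset.mul_sum]
      refine Finset.sum_congr rfl fun t _ => ?_
      ring
    rw [e1, sum_sign_choose_pow (n-i) j, sum_sign_choose_pow i m]
    ring
  have hT3' : ∑ i ∈ range (n+1), ∑ s ∈ range (j+1), ∑ t ∈ range (m+1),
        ((n.choose i : ℤ) * h^(n-i) * k^i
          * ((-1:ℤ)^s * (j.choose s) * (s:ℤ)^(n-i))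
          * ((-1:ℤ)^t * (m.choose t) * (t:ℤ)^i))
      = ∑ s ∈ range (j+1), ∑ t ∈ range (m+1),
          (-1:ℤ)^s * (-1)^t * (j.choose s) * (m.choose t) * ((s:ℤ)*h + (t:ℤ)*k)^n := by
    rw [Finset.sum_comm]
    refine Finset.sum_congr rfl fun s _ => ?_
    rw [Finset.sum_comm]
    refine Finset.sum_congr rfl fun t _ => ?_
    have : ((s:ℤ)*h + (t:ℤ)*k)^n = ((t:ℤ)*k + (s:ℤ)*h)^n := by ring_nf
    rw [this, add_pow]
    rw [Finset.mul_sum]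
    refine Finset.sum_congr rfl fun i _ => ?_
    rw [mul_pow, mul_pow]
    ring
  have hsq : (-1:ℤ)^j * (-1)^m * ((-1:ℤ)^j * (-1)^m) = 1 := by
    calc (-1:ℤ)^j * (-1)^m * ((-1:ℤ)^j * (-1)^m)
        = ((-1:ℤ)^j * (-1)^j) * ((-1:ℤ)^m * (-1)^m) := by ring
      _ = 1 := by rw [neg_one_sq_pow, neg_one_sq_pow, mul_one]
  calc ((j.factorial : ℤ) * m.factorial) * Dint n j h k m
      = ((-1:ℤ)^j * (-1)^m * ((-1:ℤ)^j * (-1)^m)) *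
          (((j.factorial : ℤ) * m.factorial) * Dint n j h k m) := by rw [hsq, one_mul]
    _ = (-1:ℤ)^j * (-1)^m *
          ((-1:ℤ)^j * (-1)^m * (((j.factorial : ℤ) * m.factorial) * Dint n j h k m)) := by ring
    _ = _ := by rw [← hT3, hT3']

open Polynomial in
noncomputable def Ppoly (h k j m : ℕ) : Polynomial ℤ :=
  ((1 + Polynomial.X)^h - 1)^j * ((1 + Polynomial.X)^k - 1)^m

open Polynomial in
lemma expand_one_add_X_pow_sub (h j : ℕ) :
    ((1 + Polynomial.X (R := ℤ))^h - 1)^j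
      = ∑ s ∈ range (j+1), Polynomial.C ((-1:ℤ)^(j-s) * (j.choose s)) * (1 + Polynomial.X)^(h*s) := by
  rw [sub_eq_add_neg, add_pow]
  refine Finset.sum_congr rfl fun s _ => ?_
  have hc : Polynomial.C ((-1:ℤ)^(j-s) * (j.choose s))
      = (-1 : Polynomial ℤ)^(j-s) * (j.choose s : Polynomial ℤ) := by
    rw [map_mul, map_pow, map_neg, map_one, Polynomial.C_eq_natCast]
  rw [← pow_mul, hc]
  ring

open Polynomial in
lemma coeff_Ppoly (h k j m r : ℕ) :
    (Ppoly h k j m).coeff r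
      = (-1:ℤ)^j * (-1)^m * ∑ s ∈ range (j+1), ∑ t ∈ range (m+1),
          (-1:ℤ)^s * (-1)^t * (j.choose s) * (m.choose t) * ((s*h + t*k).choose r : ℤ) := by
  unfold Ppoly
  rw [expand_one_add_X_pow_sub h j, expand_one_add_X_pow_sub k m, Finset.sum_mul_sum]
  have e1 : ∀ s ∈ range (j+1), ∀ t ∈ range (m+1),
      (Polynomial.C ((-1:ℤ)^(j-s) * (j.choose s)) * (1 + Polynomial.X)^(h*s))
        * (Polynomial.C ((-1:ℤ)^(m-t) * (m.choose t)) * (1 + Polynomial.X)^(k*t))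
      = Polynomial.C ((-1:ℤ)^(j-s) * (j.choose s) * ((-1:ℤ)^(m-t) * (m.choose t)))
          * (1 + Polynomial.X)^(h*s + k*t) := by
    intro s _ t _
    simp only [map_mul]
    rw [pow_add]
    ring
  rw [Finset.sum_congr rfl fun s hs => Finset.sum_congr rfl fun t ht => e1 s hs t ht]
  rw [Polynomial.finset_sum_coeff]
  rw [Finset.mul_sum]
  refine Finset.sum_congr rfl fun s hs => ?_
  rw [Polynomial.finset_sum_coeff, Finset.mul_sum]
  refine Finset.sum_congr rfl fun t ht => ?_
  rw [Polynomial.coeff_C_mul, Polynomial.coeff_one_add_X_pow]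
  simp only [mem_range] at hs ht
  rw [neg_one_pow_sub' (by omega : s ≤ j), neg_one_pow_sub' (by omega : t ≤ m)]
  have hco : s * h + t * k = h * s + k * t := by ring
  rw [hco]
  ring

open Polynomial in
lemma key_identity (n j m h k : ℕ) :
    ((j.factorial : ℤ) * m.factorial) * Dint n j (h:ℤ) (k:ℤ) m
      = ∑ r ∈ range (n+1), (r.factorial : ℤ) * stirling2 n r * (Ppoly h k j m).coeff r := by
  rw [star]
  have e1 : ∀ s ∈ range (j+1), ∀ t ∈ range (m+1),
      (-1:ℤ)^s * (-1)^t * (j.choose s) * (m.choose t) * ((s:ℤ)*(h:ℤ) + (t:ℤ)*(k:ℤ))^n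
      = ∑ r ∈ range (n+1), (-1:ℤ)^s * (-1)^t * (j.choose s) * (m.choose t)
          * (((s*h + t*k).choose r : ℤ) * (r.factorial : ℤ) * stirling2 n r) := by
    intro s _ t _
    have hb : ((s:ℤ)*(h:ℤ) + (t:ℤ)*(k:ℤ)) = ((s*h + t*k : ℕ) : ℤ) := by push_cast; ring
    rw [hb, pow_eq_sum_choose (s*h + t*k) n, Finset.mul_sum]
  rw [Finset.sum_congr rfl fun s hs => Finset.sum_congr rfl fun t ht => e1 s hs t ht]
  have e2 : ∑ s ∈ range (j+1), ∑ t ∈ range (m+1), ∑ r ∈ range (n+1),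
        ((-1:ℤ)^s * (-1)^t * (j.choose s) * (m.choose t)
          * (((s*h + t*k).choose r : ℤ) * (r.factorial : ℤ) * stirling2 n r))
      = ∑ r ∈ range (n+1), ∑ s ∈ range (j+1), ∑ t ∈ range (m+1),
        ((-1:ℤ)^s * (-1)^t * (j.choose s) * (m.choose t)
          * (((s*h + t*k).choose r : ℤ) * (r.factorial : ℤ) * stirling2 n r)) := by
    have h1 : ∀ s ∈ range (j+1), ∑ t ∈ range (m+1), ∑ r ∈ range (n+1),
        ((-1:ℤ)^s * (-1)^t * (j.choose s) * (m.choose t)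
          * (((s*h + t*k).choose r : ℤ) * (r.factorial : ℤ) * stirling2 n r))
        = ∑ r ∈ range (n+1), ∑ t ∈ range (m+1),
        ((-1:ℤ)^s * (-1)^t * (j.choose s) * (m.choose t)
          * (((s*h + t*k).choose r : ℤ) * (r.factorial : ℤ) * stirling2 n r)) :=
      fun s _ => Finset.sum_comm
    rw [Finset.sum_congr rfl h1]
    exact Finset.sum_comm
  rw [e2, Finset.mul_sum]
  refine Finset.sum_congr rfl fun r _ => ?_
  rw [coeff_Ppoly]
  have e3 : ∑ s ∈ range (j+1), ∑ t ∈ range (m+1),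
        ((-1:ℤ)^s * (-1)^t * (j.choose s) * (m.choose t)
          * (((s*h + t*k).choose r : ℤ) * (r.factorial : ℤ) * stirling2 n r))
      = (∑ s ∈ range (j+1), ∑ t ∈ range (m+1),
          (-1:ℤ)^s * (-1)^t * (j.choose s) * (m.choose t) * ((s*h + t*k).choose r : ℤ))
        * ((r.factorial : ℤ) * stirling2 n r) := by
    rw [Finset.sum_mul]
    refine Finset.sum_congr rfl fun s _ => ?_
    rw [Finset.sum_mul]
    refine Finset.sum_congr rfl fun t _ => ?_
    ring
  rw [e3]
  ring

open Polynomial in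
lemma coeff_Ppoly_eq_zero (h k j m r : ℕ) (hj : 0 < j) (hr : r < j + m) :
    (Ppoly h k j m).coeff r = 0 := by
  have hX : ∀ a : ℕ, (Polynomial.X : Polynomial ℤ) ∣ (1 + Polynomial.X)^a - 1 := by
    intro a
    rw [Polynomial.X_dvd_iff]
    simp [Polynomial.coeff_one_add_X_pow ℤ a 0]
  have h1 : (Polynomial.X : Polynomial ℤ)^j ∣ ((1 + Polynomial.X)^h - 1)^j :=
    pow_dvd_pow_of_dvd (hX h) j
  have h2 : (Polynomial.X : Polynomial ℤ)^m ∣ ((1 + Polynomial.X)^k - 1)^m :=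
    pow_dvd_pow_of_dvd (hX k) m
  have h3 : (Polynomial.X : Polynomial ℤ)^(j+m) ∣ Ppoly h k j m := by
    rw [pow_add]
    exact mul_dvd_mul h1 h2
  exact Polynomial.X_pow_dvd_iff.mp h3 r hr

lemma prime_dvd_factorial_aux (p : ℕ) (hp : p.Prime) (j m : ℕ) (hj : 0 < j)
    (hpj : ¬ p ∣ j) (hm : m = p - 1 ∨ (p = 2 ∧ m = 3)) (r : ℕ) (hr : j + m ≤ r) :
    p * (j.factorial * m.factorial) ∣ r.factorial := by
  have hstep : p * (j.factorial * m.factorial) ∣ (j + m).factorial := by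
    rcases hm with hm | ⟨hp2, hm3⟩
    · -- m = p - 1
      subst hm
      have hp2 := hp.two_le
      -- r0 := p - j % p, 1 ≤ r0 ≤ p - 1, p ∣ j + r0
      set r0 := p - j % p with hr0
      have hjp : j % p ≠ 0 := fun hc => hpj (Nat.dvd_of_mod_eq_zero hc)
      have hjpr : j % p < p := Nat.mod_lt _ (by omega)
      have h1r0 : 1 ≤ r0 := by omega
      have hr0p : r0 ≤ p - 1 := by omega
      have hpdvd : p ∣ j + r0 := by
        have hdm := Nat.div_add_mod j p
        have hmul : p * (j / p + 1) = p * (j / p) + p := by ring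
        exact ⟨j / p + 1, by omega⟩
      obtain ⟨d, hd⟩ : ∃ d, j + r0 = d + 1 := ⟨j + r0 - 1, by omega⟩
      have hdvd1 : p * j.factorial ∣ (j + r0).factorial := by
        rw [hd, Nat.factorial_succ]
        exact mul_dvd_mul (hd ▸ hpdvd) (Nat.factorial_dvd_factorial (by omega))
      have hdvd2 : (j + r0).factorial ∣ (j + (p-1)).factorial :=
        Nat.factorial_dvd_factorial (by omega)
      have hdvd3 : p * j.factorial ∣ (j + (p-1)).factorial := hdvd1.trans hdvd2
      -- (j + (p-1))! = C(j+(p-1), p-1) * j! * (p-1)!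
      have hch := Nat.add_choose_mul_factorial_mul_factorial j (p-1)
      -- p * j! ∣ C * j! * (p-1)!  ⟹  p ∣ C * (p-1)!
      rw [← hch] at hdvd3
      have hpC : p ∣ (j + (p-1)).choose (p-1) * (p-1).factorial := by
        have hj0 : 0 < j.factorial := Nat.factorial_pos j
        have : ((j + (p-1)).choose (p-1) * (p-1).factorial) * j.factorial
            = (j + (p-1)).choose (p-1) * j.factorial * (p-1).factorial := by ring
        rw [← this] at hdvd3
        exact (Nat.mul_dvd_mul_iff_right hj0).mp hdvd3
      have hnotdvd : ¬ p ∣ (p-1).factorial := by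
        intro hc
        have := (Nat.Prime.dvd_factorial hp).mp hc
        omega
      have hpC2 : p ∣ (j + (p-1)).choose (p-1) :=
        ((Nat.Prime.dvd_mul hp).mp hpC).resolve_right hnotdvd
      calc p * (j.factorial * (p-1).factorial)
          ∣ (j + (p-1)).choose (p-1) * (j.factorial * (p-1).factorial) := by
            exact mul_dvd_mul_right hpC2 _
        _ = (j + (p-1)).factorial := by rw [← hch]; ring
    · -- p = 2, m = 3, j odd
      subst hp2 hm3
      have hjodd : j % 2 = 1 := by
        rcases Nat.mod_two_eq_zero_or_one j with hc | hc
        · exact absurd (Nat.dvd_of_mod_eq_zero hc) hpj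
        · exact hc
      -- 12 ∣ (j+1)(j+2)(j+3)
      have h12 : 12 ∣ (j+1) * (j+2) * (j+3) := by
        have hmod : j ≡ j % 12 [MOD 12] := (Nat.mod_modEq j 12).symm
        have hmod3 : (j+1) * (j+2) * (j+3) ≡ (j%12+1) * (j%12+2) * (j%12+3) [MOD 12] :=
          ((hmod.add_right 1).mul (hmod.add_right 2)).mul (hmod.add_right 3)
        have hr12 : j % 12 < 12 := Nat.mod_lt _ (by norm_num)
        have hrodd : j % 12 % 2 = 1 := by
          rw [Nat.mod_mod_of_dvd j (by norm_num : 2 ∣ 12)]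
          exact hjodd
        have hdvd : 12 ∣ (j%12+1) * (j%12+2) * (j%12+3) := by
          have hcases : j % 12 = 1 ∨ j % 12 = 3 ∨ j % 12 = 5 ∨ j % 12 = 7
              ∨ j % 12 = 9 ∨ j % 12 = 11 := by omega
          rcases hcases with hc|hc|hc|hc|hc|hc <;> rw [hc] <;> decide
        exact (Nat.modEq_zero_iff_dvd).mp
          (hmod3.trans ((Nat.modEq_zero_iff_dvd).mpr hdvd))
      have hfac : (j + 3).factorial = (j+1) * (j+2) * (j+3) * j.factorial := by
        show (j + 2 + 1).factorial = _
        rw [Nat.factorial_succ, Nat.factorial_succ, Nat.factorial_succ]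
        ring
      rw [hfac]
      have : 2 * (j.factorial * Nat.factorial 3) = 12 * j.factorial := by
        norm_num [Nat.factorial]
        ring
      rw [this]
      exact mul_dvd_mul h12 dvd_rfl
  exact hstep.trans (Nat.factorial_dvd_factorial hr)

lemma core_nat (p : ℕ) (hp : p.Prime) (n j m : ℕ) (hj : 0 < j) (hpj : ¬ p ∣ j)
    (hm : m = p - 1 ∨ (p = 2 ∧ m = 3)) (h k : ℕ) :
    (p : ℤ) ∣ Dint n j (h:ℤ) (k:ℤ) m := by
  have hkey := key_identity n j m h k
  have hterm : ∀ r ∈ range (n+1),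
      ((p * (j.factorial * m.factorial) : ℕ) : ℤ)
        ∣ (r.factorial : ℤ) * stirling2 n r * (Ppoly h k j m).coeff r := by
    intro r _
    rcases Nat.lt_or_ge r (j + m) with hr | hr
    · rw [coeff_Ppoly_eq_zero h k j m r hj hr, mul_zero]
      exact dvd_zero _
    · have := prime_dvd_factorial_aux p hp j m hj hpj hm r hr
      have hZ : ((p * (j.factorial * m.factorial) : ℕ) : ℤ) ∣ (r.factorial : ℤ) :=
        Int.natCast_dvd_natCast.mpr this
      exact (hZ.mul_right _).mul_right _
  have hsum : ((p * (j.factorial * m.factorial) : ℕ) : ℤ)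
      ∣ ((j.factorial : ℤ) * m.factorial) * Dint n j (h:ℤ) (k:ℤ) m := by
    rw [hkey]
    exact Finset.dvd_sum hterm
  obtain ⟨c, hc⟩ := hsum
  refine ⟨c, ?_⟩
  have hne : ((j.factorial : ℤ) * m.factorial) ≠ 0 := by
    have := Nat.factorial_pos j
    have := Nat.factorial_pos m
    positivity
  apply mul_left_cancel₀ hne
  rw [hc]
  push_cast
  ring

lemma dvd_Dint_of_dvd_k (n j m : ℕ) (hm : 0 < m) (h k : ℤ) (p : ℤ) (hk : p ∣ k) :
    p ∣ Dint n j h k m := by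
  unfold Dint
  refine Finset.dvd_sum fun i _ => ?_
  rcases Nat.lt_or_ge i m with hi | hi
  · rw [stirling2_eq_zero hi]
    simp
  · have hki : p ∣ k^i := dvd_pow hk (by omega)
    exact ((hki.mul_left _).mul_right _)

lemma dvd_Dint_of_dvd_h (n j m : ℕ) (hj : 0 < j) (h k : ℤ) (p : ℤ) (hh : p ∣ h) :
    p ∣ Dint n j h k m := by
  unfold Dint
  refine Finset.dvd_sum fun i _ => ?_
  rcases Nat.lt_or_ge (n - i) j with hi | hi
  · rw [stirling2_eq_zero hi]
    simp
  · have hhi : p ∣ h^(n-i) := dvd_pow hh (by omega)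
    exact (((hhi.mul_left _).mul_right _).mul_right _).mul_right _

lemma core_int (p : ℕ) (hp : p.Prime) (n j m : ℕ) (hj : 0 < j) (hpj : ¬ p ∣ j)
    (hm : m = p - 1 ∨ (p = 2 ∧ m = 3)) (h k : ℤ) :
    (p : ℤ) ∣ Dint n j h k m := by
  have hp0 : (p : ℤ) ≠ 0 := by
    have := hp.two_le
    omega
  set h' : ℕ := (h % p).toNat with hh'
  set k' : ℕ := (k % p).toNat with hk'
  have hcast : ∀ z : ℤ, (((z % p).toNat : ℕ) : ZMod p) = ((z : ℤ) : ZMod p) := by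
    intro z
    have h1 : (((z % p).toNat : ℕ) : ℤ) = z % p :=
      Int.toNat_of_nonneg (Int.emod_nonneg z hp0)
    calc (((z % p).toNat : ℕ) : ZMod p) = ((((z % p).toNat : ℕ) : ℤ) : ZMod p) := by
          push_cast; ring
      _ = ((z % p : ℤ) : ZMod p) := by rw [h1]
      _ = ((z : ℤ) : ZMod p) := (ZMod.intCast_eq_intCast_iff _ _ _).mpr (Int.mod_modEq z p)
  have hnat := core_nat p hp n j m hj hpj hm h' k'
  have hzero : ((Dint n j (h':ℤ) (k':ℤ) m : ℤ) : ZMod p) = 0 :=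
    (ZMod.intCast_zmod_eq_zero_iff_dvd _ p).mpr hnat
  have heq : ((Dint n j h k m : ℤ) : ZMod p) = ((Dint n j (h':ℤ) (k':ℤ) m : ℤ) : ZMod p) := by
    unfold Dint
    push_cast
    refine Finset.sum_congr rfl fun i _ => ?_
    rw [← hcast h, ← hcast k]
  rw [← heq] at hzero
  exact (ZMod.intCast_zmod_eq_zero_iff_dvd _ p).mp hzero

lemma fact_pred_mul (b : ℕ) (hb : 1 ≤ b) : (b-1).factorial * b = b.factorial := by
  obtain ⟨c, rfl⟩ : ∃ c, b = c + 1 := ⟨b - 1, by omega⟩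
  simp [Nat.factorial_succ, Nat.add_sub_cancel, Nat.mul_comm]

lemma composite_dvd_factorial (m : ℕ) (hnp : ¬ (m+1).Prime) (hm4 : m ≠ 3) :
    (m + 1) ∣ m.factorial := by
  rcases Nat.lt_or_ge m 1 with hm | hm
  · interval_cases m
    · simp
  · -- m ≥ 1, c := m+1 ≥ 2 composite
    obtain ⟨a, ha, ha2, halt⟩ := Nat.exists_dvd_of_not_prime2 (by omega) hnp
    obtain ⟨b, hb⟩ := ha
    have hb2 : 2 ≤ b := by
      rcases Nat.lt_or_ge b 2 with hblt | hble
      · interval_cases b <;> omega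
      · exact hble
    have hblt : b < m + 1 := by nlinarith
    rcases Nat.lt_trichotomy a b with hab | hab | hab
    · -- a < b ≤ m
      have h1 : a ∣ (b-1).factorial := Nat.dvd_factorial (by omega) (by omega)
      have h2 : a * b ∣ (b-1).factorial * b := mul_dvd_mul h1 dvd_rfl
      have h3 : (b-1).factorial * b = b.factorial := fact_pred_mul b (by omega)
      rw [h3] at h2
      rw [hb]
      exact h2.trans (Nat.factorial_dvd_factorial (by omega))
    · -- a = b, c = a^2, a ≥ 3
      subst hab
      have ha3 : 3 ≤ a := by
        rcases Nat.lt_or_ge a 3 with hlt | hge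
        · interval_cases a <;> omega
        · exact hge
      have h2a : 2 * a ≤ m := by nlinarith
      have h1 : a ∣ (2*a - 1).factorial := Nat.dvd_factorial (by omega) (by omega)
      have h2 : a * (2*a) ∣ (2*a - 1).factorial * (2*a) := mul_dvd_mul h1 dvd_rfl
      have h3 : (2*a - 1).factorial * (2*a) = (2*a).factorial := fact_pred_mul (2*a) (by omega)
      rw [h3] at h2
      have h4 : (m+1) ∣ a * (2*a) := ⟨2, by rw [hb]; ring⟩
      exact (h4.trans h2).trans (Nat.factorial_dvd_factorial (by omega))
    · -- b < a: symmetric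
      have halt' : a < m + 1 := halt
      have h1 : b ∣ (a-1).factorial := Nat.dvd_factorial (by omega) (by omega)
      have h2 : b * a ∣ (a-1).factorial * a := mul_dvd_mul h1 dvd_rfl
      have h3 : (a-1).factorial * a = a.factorial := fact_pred_mul a (by omega)
      rw [h3] at h2
      have h4 : (m+1) ∣ b * a := ⟨1, by rw [hb]; ring⟩
      exact (h4.trans h2).trans (Nat.factorial_dvd_factorial (by omega))

lemma key_dvd (n j : ℕ) (hj : 0 < j) (h k : ℤ)
    (hyp : ∀ p : ℕ, p.Prime → p ∣ j → ((p : ℤ) ∣ h ∨ (p : ℤ) ∣ k)) (m : ℕ) :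
    ((m:ℤ) + 1) ∣ (m.factorial : ℤ) * Dint n j h k m := by
  have main : ∀ p : ℕ, p.Prime → (m = p - 1 ∨ (p = 2 ∧ m = 3)) → (p:ℤ) ∣ Dint n j h k m := by
    intro p hp hm
    have hm1 : 0 < m := by
      rcases hm with hm | ⟨h2, h3⟩
      · have := hp.two_le; omega
      · omega
    by_cases hpj : p ∣ j
    · rcases hyp p hp hpj with hh | hk
      · exact dvd_Dint_of_dvd_h n j m hj h k p hh
      · exact dvd_Dint_of_dvd_k n j m hm1 h k p hk
    · exact core_int p hp n j m hj hpj hm h k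
  by_cases hprime : (m+1).Prime
  · have hdvd := main (m+1) hprime (Or.inl (by omega))
    have : ((m:ℤ)+1) = ((m+1 : ℕ) : ℤ) := by push_cast; ring
    rw [this]
    exact Dvd.dvd.mul_left hdvd _
  · by_cases hm3 : m = 3
    · subst hm3
      have hdvd := main 2 Nat.prime_two (Or.inr ⟨rfl, rfl⟩)
      obtain ⟨c, hc⟩ := hdvd
      refine ⟨3 * c, ?_⟩
      rw [hc]
      norm_num [Nat.factorial]
      ring
    · have hdvd := composite_dvd_factorial m hprime hm3
      have : ((m:ℤ)+1) ∣ (m.factorial : ℤ) := by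
        have := Int.natCast_dvd_natCast.mpr hdvd
        push_cast at this
        exact this
      exact this.mul_right _

lemma decomp (n j : ℕ) (hj : 0 < j) (h k : ℤ) :
    ∑ i ∈ Finset.range (n - j + 1),
        (n.choose i : ℚ) * (h : ℚ) ^ (n - i) * (stirling2 (n - i) j : ℚ) *
          (k : ℚ) ^ i * bernoulli i
      = ∑ m ∈ range (n+1),
          (-1:ℚ)^m * m.factorial * ((Dint n j h k m : ℤ) : ℚ) / ((m:ℚ)+1) := by
  have hext : ∑ i ∈ Finset.range (n - j + 1),
        (n.choose i : ℚ) * (h : ℚ) ^ (n - i) * (stirling2 (n - i) j : ℚ) *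
          (k : ℚ) ^ i * bernoulli i
      = ∑ i ∈ Finset.range (n + 1),
        (n.choose i : ℚ) * (h : ℚ) ^ (n - i) * (stirling2 (n - i) j : ℚ) *
          (k : ℚ) ^ i * bernoulli i := by
    apply Finset.sum_subset (Finset.range_subset_range.mpr (by omega))
    intro i hi hni
    simp only [mem_range, not_lt] at hi hni
    rw [stirling2_eq_zero (by omega : n - i < j)]
    simp
  rw [hext]
  have hbc : ∀ i ∈ range (n+1),
      (n.choose i : ℚ) * (h : ℚ) ^ (n - i) * (stirling2 (n - i) j : ℚ) *
          (k : ℚ) ^ i * bernoulli i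
      = ∑ m ∈ range (n+1),
          ((n.choose i : ℚ) * (h : ℚ) ^ (n - i) * (stirling2 (n - i) j : ℚ) * (k : ℚ) ^ i
            * ((-1:ℚ)^m * m.factorial * (stirling2 i m : ℚ) / ((m:ℚ)+1))) := by
    intro i hi
    simp only [mem_range] at hi
    rw [bernoulli_eq_bcand i]
    unfold bcand
    rw [Finset.mul_sum]
    apply Finset.sum_subset (Finset.range_subset_range.mpr (by omega))
    intro m _ hm
    simp only [mem_range, not_lt] at hm
    rw [stirling2_eq_zero (by omega : i < m)]
    simp
  rw [Finset.sum_congr rfl hbc, Finset.sum_comm]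
  refine Finset.sum_congr rfl fun m _ => ?_
  have hD : ((Dint n j h k m : ℤ) : ℚ)
      = ∑ i ∈ range (n+1), (n.choose i : ℚ) * (h : ℚ) ^ (n - i) * (stirling2 (n - i) j : ℚ)
          * (k : ℚ) ^ i * (stirling2 i m : ℚ) := by
    unfold Dint
    push_cast
    rfl
  rw [hD, Finset.mul_sum, Finset.sum_div]
  refine Finset.sum_congr rfl fun i _ => ?_
  ring

/-- Generalized Almkvist–Meurman–Gy: if every prime divisor of `j` divides `h` or `k`,
then `∑_{i=0}^{n-j} C(n,i) h^{n-i} S(n-i,j) k^i B_i` is an integer. -/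
theorem gen_almkvist_meurman_gy (j : ℕ) (hj : 0 < j) (h k : ℤ)
    (hp : ∀ p : ℕ, p.Prime → p ∣ j → ((p : ℤ) ∣ h ∨ (p : ℤ) ∣ k)) (n : ℕ) :
    ∃ m : ℤ, ∑ i ∈ Finset.range (n - j + 1),
      (n.choose i : ℚ) * (h : ℚ) ^ (n - i) * (stirling2 (n - i) j : ℚ) *
        (k : ℚ) ^ i * bernoulli i = m := by
  have hc : ∀ m : ℕ, ∃ c : ℤ, (m.factorial : ℤ) * Dint n j h k m = ((m:ℤ)+1) * c :=
    fun m => key_dvd n j hj h k hp m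
  choose c hcc using hc
  refine ⟨∑ m ∈ Finset.range (n+1), (-1:ℤ)^m * c m, ?_⟩
  rw [decomp n j hj h k]
  push_cast
  refine Finset.sum_congr rfl fun m _ => ?_
  have hm0 : ((m:ℚ)+1) ≠ 0 := by positivity
  rw [div_eq_iff hm0]
  have hq := congrArg (fun z : ℤ => (z : ℚ)) (hcc m)
  push_cast at hq
  linear_combination ((-1:ℚ)^m) * hq
end

section
/- Let r and s be integers with s ≠ 0, and let E_n(u) be the n-th Euler polynomial. If s is even, then s^n E_n(r/s) is an integer for all n; if s is odd, then (1/2) s^n (E_n(r/s) − (−1)^r E_n(0)) is an integer for all n. -/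
open Polynomial in
/-- The Euler polynomials, defined by the recurrence
`E_n(x) = x^n - (1/2) ∑_{i<n} C(n,i) E_i(x)`,
equivalent to the generating function `2e^{ux}/(e^x+1) = ∑ E_n(u) x^n/n!`. -/
noncomputable def eulerPoly : ℕ → Polynomial ℚ
  | n => X ^ n - Polynomial.C (1 / 2 : ℚ) *
      ∑ i ∈ (Finset.range n).attach,
        have : (i : ℕ) < n := Finset.mem_range.mp i.2
        Polynomial.C (n.choose i : ℚ) * eulerPoly i

open Polynomial Finset

lemma eulerPoly_def (n : ℕ) : eulerPoly n = X ^ n - Polynomial.C (1/2 : ℚ) *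
    ∑ i ∈ Finset.range n, Polynomial.C (n.choose i : ℚ) * eulerPoly i := by
  rw [eulerPoly]
  congr 1
  congr 1
  exact Finset.sum_attach _ (fun i => Polynomial.C ((n.choose i : ℚ)) * eulerPoly i)

lemma eulerPoly_shift (n : ℕ) (x : ℚ) :
    (eulerPoly n).eval (x + 1) + (eulerPoly n).eval x = 2 * x ^ n := by
  induction n using Nat.strong_induction_on with
  | _ n ih =>
    have hbin : ∑ i ∈ range n, (n.choose i : ℚ) * x ^ i = (x + 1) ^ n - x ^ n := by
      have h := add_pow x 1 n
      rw [Finset.sum_range_succ] at h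
      simp at h
      rw [h]
      have : ∀ i ∈ range n, x ^ i * (n.choose i : ℚ) = (n.choose i : ℚ) * x ^ i := by
        intros; ring
      rw [Finset.sum_congr rfl this]
      ring
    have hS : ∀ y : ℚ, (eulerPoly n).eval y
        = y ^ n - (1/2) * ∑ i ∈ range n, (n.choose i : ℚ) * (eulerPoly i).eval y := by
      intro y
      rw [eulerPoly_def]
      simp [eval_finset_sum]
    rw [hS, hS]
    have hsum : ∑ i ∈ range n, (n.choose i : ℚ) * (eulerPoly i).eval (x+1)
        + ∑ i ∈ range n, (n.choose i : ℚ) * (eulerPoly i).eval x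
        = ∑ i ∈ range n, (n.choose i : ℚ) * (2 * x ^ i) := by
      rw [← Finset.sum_add_distrib]
      refine Finset.sum_congr rfl fun i hi => ?_
      rw [← mul_add, ih i (mem_range.mp hi)]
    have h2 : ∑ i ∈ range n, (n.choose i : ℚ) * (2 * x ^ i)
        = 2 * ((x + 1) ^ n - x ^ n) := by
      rw [← hbin, Finset.mul_sum]
      refine Finset.sum_congr rfl fun i hi => ?_
      ring
    linarith [hsum, h2]

lemma eulerPoly_nat (n : ℕ) (m : ℕ) : ∃ c : ℤ,
    (eulerPoly n).eval (m : ℚ) = (-1 : ℚ) ^ m * (eulerPoly n).eval 0 + 2 * c := by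
  induction m with
  | zero => exact ⟨0, by simp⟩
  | succ m ih =>
    obtain ⟨c, hc⟩ := ih
    refine ⟨(m : ℤ) ^ n - c, ?_⟩
    have h := eulerPoly_shift n (m : ℚ)
    push_cast
    -- push_cast at hc
    rw [show ((m : ℚ) + 1) = (m : ℚ) + 1 from rfl]
    have : (eulerPoly n).eval ((m : ℚ) + 1) = 2 * (m:ℚ)^n - (eulerPoly n).eval (m:ℚ) := by
      linarith
    rw [this, hc]
    ring

lemma eulerPoly_natDegree_le (n : ℕ) : (eulerPoly n).natDegree ≤ n := by
  induction n using Nat.strong_induction_on with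
  | _ n ih =>
    rw [eulerPoly_def]
    refine le_trans (natDegree_sub_le _ _) ?_
    simp only [natDegree_X_pow, max_le_iff]
    refine ⟨le_refl n, ?_⟩
    refine le_trans (natDegree_mul_le) ?_
    simp only [natDegree_C, zero_add]
    refine le_trans (natDegree_sum_le _ _) ?_
    rw [Finset.fold_max_le]
    refine ⟨Nat.zero_le n, fun i hi => ?_⟩
    refine le_trans (natDegree_mul_le) ?_
    simp only [natDegree_C, zero_add]
    exact le_trans (ih i (mem_range.mp hi)) (le_of_lt (mem_range.mp hi)) |>.trans (le_refl n) |>.trans (le_refl n) |> (fun h => h)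

abbrev intSub : Subring ℚ := (Int.castRingHom ℚ).range

lemma eulerPoly_coeff_mem (n : ℕ) : ∀ k, (2 : ℚ) ^ (n - k) * (eulerPoly n).coeff k ∈ intSub := by
  induction n using Nat.strong_induction_on with
  | _ n ih =>
    intro k
    rw [eulerPoly_def]
    rw [coeff_sub, coeff_X_pow, coeff_C_mul, finset_sum_coeff]
    rw [mul_sub]
    refine Subring.sub_mem _ ?_ ?_
    · by_cases h : k = n
      · subst h; simp
      · simp [h]
    · rw [Finset.mul_sum, Finset.mul_sum]
      refine Subring.sum_mem _ fun i hi => ?_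
      have hin : i < n := mem_range.mp hi
      rw [coeff_C_mul]
      by_cases hk : k ≤ i
      · have he : n - k = (n - 1 - i) + 1 + (i - k) := by omega
        have : (2:ℚ) ^ (n-k) * (1/2 * ((n.choose i : ℚ) * (eulerPoly i).coeff k))
            = ((2:ℚ)^(n-1-i) * (n.choose i : ℚ)) * ((2:ℚ)^(i-k) * (eulerPoly i).coeff k) := by
          rw [he]; ring
        rw [this]
        refine Subring.mul_mem _ ?_ (ih i hin k)
        exact ⟨2^(n-1-i) * (n.choose i : ℤ), by simp⟩
      · have : (eulerPoly i).coeff k = 0 := by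
          apply coeff_eq_zero_of_natDegree_lt
          exact lt_of_le_of_lt (eulerPoly_natDegree_le i) (by omega)
        rw [this]
        simp

lemma eulerPoly_eval_div (n : ℕ) (x y : ℚ) (hy : y ≠ 0) :
    y ^ n * (eulerPoly n).eval (x / y)
      = ∑ k ∈ range (n+1), (eulerPoly n).coeff k * x ^ k * y ^ (n-k) := by
  rw [eval_eq_sum_range' (Nat.lt_succ_of_le (eulerPoly_natDegree_le n)), Finset.mul_sum]
  refine Finset.sum_congr rfl fun k hk => ?_
  have hk' : k ≤ n := Nat.lt_succ_iff.mp (mem_range.mp hk)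
  have hyy : y ^ n = y ^ (n-k) * y ^ k := by rw [← pow_add, Nat.sub_add_cancel hk']
  rw [hyy, div_pow]
  field_simp


/-- Fox's theorem for Euler polynomials. -/
theorem fox (r s : ℤ) (hs : s ≠ 0) (n : ℕ) :
    (Even s → ∃ m : ℤ, (s : ℚ) ^ n * (eulerPoly n).eval ((r : ℚ) / (s : ℚ)) = m) ∧
    (Odd s → ∃ m : ℤ, (1 / 2 : ℚ) * (s : ℚ) ^ n *
        ((eulerPoly n).eval ((r : ℚ) / (s : ℚ)) - (-1 : ℚ) ^ r * (eulerPoly n).eval 0) = m) := by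
  have hsQ : (s : ℚ) ≠ 0 := Int.cast_ne_zero.mpr hs
  have hev := eulerPoly_eval_div n (r : ℚ) (s : ℚ) hsQ
  constructor
  · rintro ⟨t, ht⟩
    have hmem : (∑ k ∈ range (n+1), (eulerPoly n).coeff k * (r:ℚ) ^ k * (s:ℚ) ^ (n-k)) ∈ intSub := by
      refine Subring.sum_mem _ fun k hk => ?_
      have hsQ2 : (s : ℚ) = 2 * (t : ℚ) := by rw [ht]; push_cast; ring
      have : (eulerPoly n).coeff k * (r:ℚ) ^ k * (s:ℚ) ^ (n-k)
          = ((2:ℚ)^(n-k) * (eulerPoly n).coeff k) * ((r:ℚ)^k * (t:ℚ)^(n-k)) := by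
        rw [hsQ2, mul_pow]; ring
      rw [this]
      refine Subring.mul_mem _ (eulerPoly_coeff_mem n k) ?_
      exact ⟨r^k * t^(n-k), by simp⟩
    obtain ⟨m, hm⟩ := hmem
    exact ⟨m, by rw [hev]; exact hm.symm⟩
  · intro hodd
    obtain ⟨l, hl⟩ := hodd
    -- integer scaled coefficients
    have hz : ∀ k : ℕ, ∃ z : ℤ, (z : ℚ) = 2 ^ n * (eulerPoly n).coeff k := by
      intro k
      by_cases hk : k ≤ n
      · obtain ⟨z, hz⟩ := eulerPoly_coeff_mem n k
        refine ⟨2 ^ k * z, ?_⟩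
        have : ((Int.castRingHom ℚ) z : ℚ) = (z : ℚ) := rfl
        rw [this] at hz
        have hpow : (2:ℚ) ^ n = 2 ^ k * 2 ^ (n-k) := by
          rw [← pow_add, Nat.add_sub_cancel' hk]
        push_cast
        rw [hpow, hz]
        ring
      · refine ⟨0, ?_⟩
        have : (eulerPoly n).coeff k = 0 := by
          apply coeff_eq_zero_of_natDegree_lt
          exact lt_of_le_of_lt (eulerPoly_natDegree_le n) (by omega)
        simp [this]
    choose z hzz using hz
    set A : ℤ := ∑ k ∈ range (n+1), z k * r ^ k * s ^ (n-k) with hAdef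
    have hA : (A : ℚ) = 2 ^ n * ((s:ℚ) ^ n * (eulerPoly n).eval ((r:ℚ)/(s:ℚ))) := by
      rw [hev, Finset.mul_sum, hAdef]
      push_cast
      refine Finset.sum_congr rfl fun k hk => ?_
      rw [hzz k]; ring
    set B : ℤ := z 0 * s ^ n with hBdef
    have hB : (B : ℚ) = 2 ^ n * (eulerPoly n).eval 0 * (s:ℚ) ^ n := by
      rw [hBdef]; push_cast
      rw [hzz 0, coeff_zero_eq_eval_zero]
    -- choose m with s * m ≡ r mod 2^(n+1)
    have hcop : IsCoprime (s : ℤ) 2 := ⟨1, -l, by linear_combination hl⟩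
    obtain ⟨a, b, hab⟩ := hcop.pow_right (n := n+1)
    have h2pos : (0:ℤ) < 2 ^ (n+1) := by positivity
    have h2one : (1:ℤ) ≤ 2 ^ (n+1) := h2pos
    set m0 : ℤ := a * r with hm0
    have key : s * m0 - r = 2 ^ (n+1) * (-b * r) := by
      rw [hm0]; linear_combination r * hab
    set m : ℕ := (m0 + 2 ^ (n+1) * |m0|).toNat with hmdef
    have hm : (m : ℤ) = m0 + 2 ^ (n+1) * |m0| := by
      rw [hmdef]
      apply Int.toNat_of_nonneg
      nlinarith [abs_nonneg m0, neg_abs_le m0]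
    have hsm : (2:ℤ) ^ (n+1) ∣ s * (m:ℤ) - r :=
      ⟨-b * r + s * |m0|, by rw [hm]; linear_combination key⟩
    set Am : ℤ := ∑ k ∈ range (n+1), z k * (m:ℤ) ^ k with hAmdef
    have h1 : (2:ℤ) ^ (n+1) ∣ A - s ^ n * Am := by
      have heq : A - s ^ n * Am = ∑ k ∈ range (n+1), z k * s ^ (n-k) * (r ^ k - (s * (m:ℤ)) ^ k) := by
        rw [hAdef, hAmdef, Finset.mul_sum, ← Finset.sum_sub_distrib]
        refine Finset.sum_congr rfl fun k hk => ?_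
        have hk' : k ≤ n := Nat.lt_succ_iff.mp (mem_range.mp hk)
        have hss : (s:ℤ) ^ n = s ^ (n-k) * s ^ k := by rw [← pow_add, Nat.sub_add_cancel hk']
        rw [hss, mul_pow]
        ring
      rw [heq]
      refine Finset.dvd_sum fun k hk => Dvd.dvd.mul_left ?_ _
      have hd : (r - s * (m:ℤ)) ∣ (r ^ k - (s * (m:ℤ)) ^ k) := sub_dvd_pow_sub_pow _ _ k
      refine dvd_trans ?_ hd
      have := dvd_neg.mpr hsm
      rwa [neg_sub] at this
    have hAm : (Am : ℚ) = 2 ^ n * (eulerPoly n).eval ((m:ℕ) : ℚ) := by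
      rw [eval_eq_sum_range' (Nat.lt_succ_of_le (eulerPoly_natDegree_le n)), Finset.mul_sum, hAmdef]
      push_cast
      refine Finset.sum_congr rfl fun k hk => ?_
      rw [hzz k]; ring
    obtain ⟨c, hc⟩ := eulerPoly_nat n m
    have hAm2 : Am = (-1) ^ m * z 0 + 2 ^ (n+1) * c := by
      have hq : (Am : ℚ) = (((-1) ^ m * z 0 + 2 ^ (n+1) * c : ℤ) : ℚ) := by
        rw [hAm, hc]
        push_cast
        rw [hzz 0, coeff_zero_eq_eval_zero]
        ring
      exact_mod_cast hq
    have h2 : (2:ℤ) ^ (n+1) ∣ A - (-1) ^ m * B := by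
      have heq : A - (-1) ^ m * B = (A - s ^ n * Am) + s ^ n * (Am - (-1) ^ m * z 0) := by
        rw [hBdef]; ring
      rw [heq]
      refine dvd_add h1 ?_
      have : Am - (-1) ^ m * z 0 = 2 ^ (n+1) * c := by rw [hAm2]; ring
      rw [this]
      exact ⟨s ^ n * c, by ring⟩
    -- parity of m matches r
    have hpar : Even ((m:ℤ) - r) := by
      obtain ⟨c0, hc0⟩ := hsm
      refine ⟨2 ^ n * c0 - l * (m:ℤ), ?_⟩
      have h2n1 : (2:ℤ) ^ (n+1) = 2 * 2 ^ n := by ring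
      rw [h2n1] at hc0
      linear_combination hc0 - (m:ℤ) * hl
    rcases Int.even_or_odd r with hr | hr
    · have hme : Even (m:ℤ) := by
        rcases hpar with ⟨u, hu⟩; rcases hr with ⟨v, hv⟩
        exact ⟨u + v, by omega⟩
      have hmn : Even m := by rwa [Int.even_coe_nat] at hme
      have he1 : ((-1:ℤ)) ^ m = 1 := hmn.neg_one_pow
      have he2 : ((-1:ℚ)) ^ r = 1 := hr.neg_one_zpow
      rw [he1] at h2
      obtain ⟨w, hw⟩ := h2
      refine ⟨w, ?_⟩
      have hwQ : (A:ℚ) - (B:ℚ) = 2 ^ (n+1) * (w:ℚ) := by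
        have := congrArg (Int.cast : ℤ → ℚ) hw
        push_cast at this
        linarith [this]
      rw [he2, one_mul]
      rw [hA] at hwQ; rw [hB] at hwQ
      refine mul_left_cancel₀ (a := (2:ℚ)^(n+1)) (by positivity) ?_
      linear_combination hwQ
    · have hmo : Odd (m:ℤ) := by
        rcases hpar with ⟨u, hu⟩; rcases hr with ⟨v, hv⟩
        exact ⟨u + v, by omega⟩
      have hmn : Odd m := by rwa [Int.odd_coe_nat] at hmo
      have he1 : ((-1:ℤ)) ^ m = -1 := hmn.neg_one_pow
      have he2 : ((-1:ℚ)) ^ r = -1 := hr.neg_one_zpow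
      rw [he1] at h2
      obtain ⟨w, hw⟩ := h2
      refine ⟨w, ?_⟩
      have hwQ : (A:ℚ) + (B:ℚ) = 2 ^ (n+1) * (w:ℚ) := by
        have := congrArg (Int.cast : ℤ → ℚ) hw
        push_cast at this
        linarith [this]
      rw [he2]
      rw [hA] at hwQ; rw [hB] at hwQ
      refine mul_left_cancel₀ (a := (2:ℚ)^(n+1)) (by positivity) ?_
      linear_combination hwQ
end
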